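/- Let $K$ be a compact Hausdorff space, $\varphi : K \to K$ continuous, and $T_\varphi$ the composition operator $f \mapsto f \circ \varphi$ on $C(K)$. If for every closed $U \subseteq K$ with nonempty interior the image $\varphi(U)$ has nonempty interior, then $T_\varphi$ is order continuous. -/

import Mathlib

/-!
If `g ≤ f ∘ φ` for all `f ∈ D` and `g(x₀) > 0`, then `f ≥ g(x₀)/2` on `φ(U)` for the closed set
`U = {g ≥ g(x₀)/2}`, whose interior contains `x₀`. By hypothesis `φ(U)` contains a nonempty open
set `W`, and a bump function supported in `W` is then a nonzero positive lower bound of `D`.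
-/

open Set

section CompletelyRegular

variable {X : Type*} [TopologicalSpace X] [CompletelyRegularSpace X]

lemma ContinuousMap.exists_bump_of_mem_isOpen {W : Set X} (hW : IsOpen W) {x : X} (hx : x ∈ W) :
    ∃ u : C(X, ℝ), u x = 1 ∧ EqOn u 0 Wᶜ ∧ ∀ y, u y ∈ Icc 0 1 := by
  obtain ⟨f, hf, hfx, hfW⟩ := CompletelyRegularSpace.completely_regular_isOpen x W hW hx
  refine ⟨⟨fun y => 1 - f y, continuous_const.sub (continuous_subtype_val.comp hf)⟩,
    ?_, fun y hy => ?_,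
    fun y => ⟨unitInterval.one_minus_nonneg (f y), unitInterval.one_minus_le_one (f y)⟩⟩
  · simp [hfx]
  · simp [hfW hy]

lemma ContinuousMap.exists_lt_of_isGLB_zero {D : Set C(X, ℝ)} (hD : IsGLB D 0) {W : Set X}
    (hW : IsOpen W) (hWne : W.Nonempty) {c : ℝ} (hc : 0 < c) :
    ∃ f ∈ D, ∃ y ∈ W, f y < c := by
  by_contra! hge
  obtain ⟨y₀, hy₀⟩ := hWne
  obtain ⟨u, huy₀, hu0, hu⟩ := exists_bump_of_mem_isOpen hW hy₀
  have hlower : c • u ∈ lowerBounds D := by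
    intro f hf
    refine ContinuousMap.le_def.mpr fun y => ?_
    by_cases hy : y ∈ W
    · calc (c • u) y = c * u y := rfl
        _ ≤ c * 1 := mul_le_mul_of_nonneg_left (hu y).2 hc.le
        _ ≤ f y := by simpa using hge f hf y hy
    · simpa [hu0 hy] using ContinuousMap.le_def.mp (hD.1 hf) y
  have := ContinuousMap.le_def.mp (hD.2 hlower) y₀
  simp [huy₀] at this
  linarith

end CompletelyRegular

theorem stmt3 {K : Type*} [TopologicalSpace K] [CompactSpace K] [T2Space K]
    (φ : C(K, K))
    (hφ : ∀ U : Set K, IsClosed U → (interior U).Nonempty →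
      (interior ((φ : K → K) '' U)).Nonempty) :
    ∀ D : Set C(K, ℝ), D.Nonempty → DirectedOn (fun f g => g ≤ f) D →
      IsGLB D 0 → IsGLB ((fun f : C(K, ℝ) => f.comp φ) '' D) 0 := by
  intro D _ _ hD
  refine ⟨?_, fun g hg => ?_⟩
  · rintro _ ⟨f, hf, rfl⟩
    exact ContinuousMap.le_def.mpr fun x => ContinuousMap.le_def.mp (hD.1 hf) (φ x)
  by_contra! hg0
  obtain ⟨x₀, hx₀⟩ : ∃ x₀, 0 < g x₀ := by
    by_contra! hle
    exact hg0 (ContinuousMap.le_def.mpr hle)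
  set U := {x | g x₀ / 2 ≤ g x}
  have hx₀U : x₀ ∈ interior U :=
    interior_maximal (fun x (hx : g x₀ / 2 < g x) => hx.le)
      (isOpen_lt continuous_const g.continuous)
      (show x₀ ∈ {x | g x₀ / 2 < g x} from half_lt_self hx₀)
  obtain ⟨f, hf, y, hyW, hfy⟩ := ContinuousMap.exists_lt_of_isGLB_zero hD isOpen_interior
    (hφ U (isClosed_le continuous_const g.continuous) ⟨x₀, hx₀U⟩) (half_pos hx₀)
  obtain ⟨z, hzU, rfl⟩ := interior_subset hyW
  have hgz : g z ≤ f (φ z) := ContinuousMap.le_def.mp (hg ⟨f, hf, rfl⟩) z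
  exact (hzU.trans hgz).not_gt hfy
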